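/- arXiv:1206.5082 — 5 statements merged into one kernel-verified Lean document; each statement's English description precedes it below -/
import Mathlib

section
/- For every finite simple graph G, the clique number of its edge-clique graph satisfies ω(K_e(G)) = C(ω(G), 2), the binomial coefficient 'ω(G) choose 2', where ω denotes the clique number. -/
namespace ECG

/-- The edge-clique graph `K_e(G)`: its vertices are the edges of `G`, and two distinct
edges are adjacent exactly when all their endpoints are pairwise adjacent in `G`
(i.e. the two edges lie in a common clique of `G`). -/
def edgeCliqueGraph {V : Type*} (G : SimpleGraph V) : SimpleGraph G.edgeSet where
  Adj e f := e ≠ f ∧ G.IsClique {v | v ∈ (e : Sym2 V) ∨ v ∈ (f : Sym2 V)}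
  symm := ⟨by
    rintro e f ⟨hne, hcl⟩
    refine ⟨hne.symm, ?_⟩
    have h : {v | v ∈ (f : Sym2 V) ∨ v ∈ (e : Sym2 V)} =
        {v | v ∈ (e : Sym2 V) ∨ v ∈ (f : Sym2 V)} := by
      ext v; exact or_comm
    rw [h]; exact hcl⟩
  loopless := ⟨fun e h => h.1 rfl⟩

/-- A set of vertices is independent when no two of its members are adjacent. -/
def IsIndepSet {V : Type*} (G : SimpleGraph V) (S : Set V) : Prop :=
  S.Pairwise fun a b => ¬ G.Adj a b

/-- The independence number `α(G)`: the maximum cardinality of an independent set. -/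
noncomputable def indepNum {V : Type*} (G : SimpleGraph V) : ℕ :=
  sSup {n | ∃ S : Finset V, IsIndepSet G ↑S ∧ S.card = n}

end ECG

/-!
A clique of `K_e(G)` is a set of edges whose endpoints together form a clique `T` of `G`, so it
has at most `C(|T|, 2) ≤ C(ω(G), 2)` elements. Conversely, all `C(ω(G), 2)` edges inside a
maximum clique of `G` are pairwise adjacent in `K_e(G)`.
-/

namespace Finset

theorem card_sym2_filter_not_isDiag {α : Type*} [DecidableEq α] (s : Finset α) :
    #{z ∈ s.sym2 | ¬z.IsDiag} = (#s).choose 2 := by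
  rw [sym2_eq_image, Sym2.filter_image_mk_not_isDiag, Sym2.card_image_offDiag]

end Finset

namespace ECG

open Finset SimpleGraph

variable {V : Type*} {G : SimpleGraph V}

section edgesIn

variable [DecidableRel G.Adj]

variable (G) in
def edgesIn (T : Finset V) : Finset G.edgeSet :=
  T.sym2.subtype (· ∈ G.edgeSet)

theorem mem_edgesIn {T : Finset V} {e : G.edgeSet} :
    e ∈ edgesIn G T ↔ ∀ v ∈ (e : Sym2 V), v ∈ T := by
  rw [edgesIn, mem_subtype, mem_sym2_iff]

theorem card_edgesIn_le [DecidableEq V] (T : Finset V) : #(edgesIn G T) ≤ (#T).choose 2 := by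
  rw [edgesIn, card_subtype, ← card_sym2_filter_not_isDiag]
  exact card_le_card (monotone_filter_right _ fun _ _ => G.not_isDiag_of_mem_edgeSet)

theorem card_edgesIn_of_isClique [DecidableEq V] {T : Finset V} (hT : G.IsClique (T : Set V)) :
    #(edgesIn G T) = (#T).choose 2 := by
  rw [edgesIn, card_subtype, ← card_sym2_filter_not_isDiag]
  refine congrArg card (filter_congr fun z hz => ?_)
  induction z using Sym2.ind with
  | _ a b =>
    rw [mk_mem_sym2_iff] at hz
    rw [mem_edgeSet, Sym2.mk_isDiag_iff]
    exact ⟨G.ne_of_adj, hT hz.1 hz.2⟩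

theorem isClique_edgesIn {T : Finset V} (hT : G.IsClique (T : Set V)) :
    (edgeCliqueGraph G).IsClique (edgesIn G T : Set G.edgeSet) := by
  intro e he f hf hef
  rw [mem_coe, mem_edgesIn] at he hf
  refine ⟨hef, hT.subset ?_⟩
  rintro v (hv | hv)
  exacts [he v hv, hf v hv]

end edgesIn

def endpoints [DecidableEq V] (s : Finset G.edgeSet) : Finset V :=
  s.biUnion fun e => (e : Sym2 V).toFinset

theorem mem_endpoints [DecidableEq V] {s : Finset G.edgeSet} {v : V} :
    v ∈ endpoints s ↔ ∃ e ∈ s, v ∈ (e : Sym2 V) := by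
  simp only [endpoints, mem_biUnion, Sym2.mem_toFinset]

theorem subset_edgesIn_endpoints [DecidableEq V] [DecidableRel G.Adj] (s : Finset G.edgeSet) :
    s ⊆ edgesIn G (endpoints s) :=
  fun e he => mem_edgesIn.mpr fun _ hv => mem_endpoints.mpr ⟨e, he, hv⟩

theorem isClique_endpoints [DecidableEq V] {s : Finset G.edgeSet}
    (hs : (edgeCliqueGraph G).IsClique (s : Set G.edgeSet)) :
    G.IsClique (endpoints s : Set V) := by
  intro u hu v hv huv
  obtain ⟨e, he, hue⟩ := mem_endpoints.mp hu
  obtain ⟨f, hf, hvf⟩ := mem_endpoints.mp hv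
  by_cases hef : e = f
  · subst hef
    have he_eq : (e : Sym2 V) = s(u, v) := (Sym2.mem_and_mem_iff huv).mp ⟨hue, hvf⟩
    exact G.mem_edgeSet.mp (he_eq ▸ e.2)
  · exact (hs he hf hef).2 (Or.inl hue) (Or.inr hvf) huv

theorem card_le_choose_cliqueNum [Finite V] {s : Finset G.edgeSet}
    (hs : (edgeCliqueGraph G).IsClique (s : Set G.edgeSet)) :
    #s ≤ G.cliqueNum.choose 2 := by
  classical
  calc #s ≤ #(edgesIn G (endpoints s)) := card_le_card (subset_edgesIn_endpoints s)
    _ ≤ (#(endpoints s)).choose 2 := card_edgesIn_le _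
    _ ≤ G.cliqueNum.choose 2 :=
      Nat.choose_le_choose 2 (isClique_endpoints hs).card_le_cliqueNum

end ECG

/-- For every finite simple graph `G`, the clique number of its edge-clique
graph satisfies `ω(K_e(G)) = (ω(G)).choose 2`. -/
theorem cliqueNum_edgeCliqueGraph {V : Type*} [Fintype V] (G : SimpleGraph V) :
    (ECG.edgeCliqueGraph G).cliqueNum = (G.cliqueNum).choose 2 := by
  classical
  apply le_antisymm
  · obtain ⟨s, hs⟩ := (ECG.edgeCliqueGraph G).exists_isNClique_cliqueNum
    rw [← hs.card_eq]
    exact ECG.card_le_choose_cliqueNum hs.isClique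
  · obtain ⟨T, hT⟩ := G.exists_isNClique_cliqueNum
    rw [← hT.card_eq, ← ECG.card_edgesIn_of_isClique hT.isClique]
    exact (ECG.isClique_edgesIn hT.isClique).card_le_cliqueNum
end

section
/- For every finite simple graph G and every independent set W of vertices of G, the sum over x in W of d'(x) is at most α'(G); that is, the quantity max{ Σ_{x∈W} d'(x) : W an independent set of G } is a lower bound for α'(G). -/
/-!
For each `x ∈ W` take a maximum independent set `S x` of `G[N(x)]` and the star of edges `x y`,
`y ∈ S x`. Two edges in a common clique have pairwise adjacent endpoints. So two edges of one
star would make two vertices of `S x` adjacent, while edges of the stars at `x ≠ x'` would make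
`x` and `x'` adjacent; an edge shared by both stars would be `x x'` itself. Hence the stars are
disjoint and their union is an independent set of `K_e(G)` of size `Σ_{x ∈ W} d'(x)`.
-/

namespace ECG

section indepNum

variable {V : Type*} [Finite V] (G : SimpleGraph V)

lemma bddAbove_indepSet_cards :
    BddAbove {n | ∃ S : Finset V, IsIndepSet G ↑S ∧ S.card = n} := by
  have := Fintype.ofFinite V
  exact ⟨Fintype.card V, by rintro n ⟨S, -, rfl⟩; exact S.card_le_univ⟩

lemma card_le_indepNum {S : Finset V} (hS : IsIndepSet G ↑S) : S.card ≤ indepNum G :=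
  le_csSup (bddAbove_indepSet_cards G) ⟨S, hS, rfl⟩

lemma exists_isIndepSet_card_eq_indepNum :
    ∃ S : Finset V, IsIndepSet G ↑S ∧ S.card = indepNum G :=
  Nat.sSup_mem (s := {n | ∃ S : Finset V, IsIndepSet G ↑S ∧ S.card = n})
    ⟨0, ∅, by simp [IsIndepSet], rfl⟩ (bddAbove_indepSet_cards G)

end indepNum

section edgeCliqueGraph

variable {V : Type*} {G : SimpleGraph V}

lemma adj_of_mem_of_edgeCliqueGraph_adj {e f : G.edgeSet} (h : (edgeCliqueGraph G).Adj e f)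
    {u v : V} (hu : u ∈ (e : Sym2 V)) (hv : v ∈ (f : Sym2 V)) (huv : u ≠ v) : G.Adj u v :=
  h.2 (Or.inl hu) (Or.inr hv) huv

variable (G)

def starEdge (x : V) : G.neighborSet x ↪ G.edgeSet where
  toFun y := ⟨s(x, y), y.2⟩
  inj' _ _ h := Subtype.ext (Sym2.congr_right.1 (congrArg Subtype.val h))

variable {G}

lemma left_mem_starEdge (x : V) (y : G.neighborSet x) : x ∈ (starEdge G x y : Sym2 V) :=
  Sym2.mem_mk_left _ _

lemma right_mem_starEdge (x : V) (y : G.neighborSet x) : (y : V) ∈ (starEdge G x y : Sym2 V) :=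
  Sym2.mem_mk_right _ _

lemma adj_of_starEdge_eq {x x' : V} {y : G.neighborSet x} {y' : G.neighborSet x'}
    (h : starEdge G x y = starEdge G x' y') (hne : x ≠ x') : G.Adj x x' := by
  have hx' : x' ∈ (starEdge G x y : Sym2 V) := h ▸ left_mem_starEdge x' y'
  rcases Sym2.mem_iff.1 hx' with rfl | rfl
  · exact absurd rfl hne
  · exact y.2

variable [DecidableEq G.edgeSet]

def starUnion (W : Finset V) (S : ∀ x, Finset (G.neighborSet x)) : Finset G.edgeSet :=
  W.biUnion fun x => (S x).map (starEdge G x)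

variable {W : Finset V} (hW : IsIndepSet G ↑W) (S : ∀ x, Finset (G.neighborSet x))
include hW

lemma card_starUnion : (starUnion W S).card = ∑ x ∈ W, (S x).card := by
  rw [starUnion, Finset.card_biUnion]
  · simp only [Finset.card_map]
  · intro x hx x' hx' hne
    simp only [Finset.disjoint_left, Finset.mem_map]
    rintro e ⟨y, -, rfl⟩ ⟨y', -, h⟩
    exact hW hx hx' hne (adj_of_starEdge_eq h.symm hne)

lemma isIndepSet_starUnion (hS : ∀ x ∈ W, IsIndepSet (G.induce (G.neighborSet x)) ↑(S x)) :
    IsIndepSet (edgeCliqueGraph G) ↑(starUnion W S) := by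
  intro e he f hf hne hadj
  simp only [starUnion, Finset.coe_biUnion, Finset.mem_coe, Set.mem_iUnion, Finset.mem_map]
    at he hf
  obtain ⟨x, hx, y, hy, rfl⟩ := he
  obtain ⟨x', hx', y', hy', rfl⟩ := hf
  by_cases hxx' : x = x'
  · subst hxx'
    have hyy' : y ≠ y' := fun h => hne (h ▸ rfl)
    exact hS x hx hy hy' hyy' <| SimpleGraph.induce_adj.2 <|
      adj_of_mem_of_edgeCliqueGraph_adj hadj (right_mem_starEdge x y) (right_mem_starEdge x y')
        (Subtype.coe_ne_coe.2 hyy')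
  · exact hW hx hx' hxx' <|
      adj_of_mem_of_edgeCliqueGraph_adj hadj (left_mem_starEdge x y) (left_mem_starEdge x' y') hxx'

end edgeCliqueGraph

end ECG

/-- For every finite simple graph `G` and every independent set `W` of
vertices of `G`, `Σ_{x ∈ W} d'(x) ≤ α'(G)`, where `d'(x)` is the independence number of
the subgraph induced by the open neighborhood of `x` and `α'(G) = α(K_e(G))`. -/
theorem sum_indepNum_neighborhood_le_alpha' {V : Type*} [Fintype V] (G : SimpleGraph V)
    (W : Finset V) (hW : ECG.IsIndepSet G ↑W) :
    ∑ x ∈ W, ECG.indepNum (G.induce (G.neighborSet x)) ≤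
      ECG.indepNum (ECG.edgeCliqueGraph G) := by
  classical
  choose S hS hcard using fun x =>
    ECG.exists_isIndepSet_card_eq_indepNum (G.induce (G.neighborSet x))
  calc ∑ x ∈ W, ECG.indepNum (G.induce (G.neighborSet x))
      = (ECG.starUnion W S).card := by simp only [ECG.card_starUnion hW, hcard]
    _ ≤ ECG.indepNum (ECG.edgeCliqueGraph G) :=
      ECG.card_le_indepNum _ (ECG.isIndepSet_starUnion hW S fun x _ => hS x)
end

section
/- Let G be a finite cograph. Then α'(G) = max{ Σ_{x∈W} d'(x) : W an independent set of vertices of G }. -/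
/-!
A cograph on at least two vertices is the disjoint union or the join of two smaller cographs
(Seinsche). For `≥`, choose for each `x` of an independent set `W` a maximum independent set
`T x` of `N(x)`: the edges `x y` with `y ∈ T x` lie pairwise in no common clique.

For `≤`, induct along the decomposition, carrying besides the set `F` of edges vertex weights
that record edges leaving the current vertex set towards a part adjacent to all of it. A disjoint
union splits everything. In a join `A ∨ B`, at most one side, say `A`, contains edges of `F`;
the edges of `F` from a clique of `A` to `B` have pairwise distinct, non-adjacent ends in `B`, so
trading them for weights on their ends in `A` keeps clique weights below `α(B) ≤ d'(a)`. The old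
weights are moved onto a single independent set of one side, using that cographs are perfect in
the weighted form `∑ m ≤ α · ω_m`.
-/

open Finset SimpleGraph

namespace Cograph

variable {V : Type*} {G : SimpleGraph V}

theorem ssubset_union_left_of_disjoint {A B : Finset V} [DecidableEq V] (h : Disjoint A B)
    (hB : B.Nonempty) : A ⊂ A ∪ B :=
  left_lt_sup.2 fun hBA => hB.ne_empty (h.symm.eq_bot_of_le hBA)

theorem ssubset_union_right_of_disjoint {A B : Finset V} [DecidableEq V] (h : Disjoint A B)
    (hA : A.Nonempty) : B ⊂ A ∪ B :=
  right_lt_sup.2 fun hAB => hA.ne_empty (h.eq_bot_of_le hAB)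

theorem _root_.SimpleGraph.IsCompleteBetween.mono {s t s' t' : Set V}
    (h : G.IsCompleteBetween s t) (hs : s' ⊆ s) (ht : t' ⊆ t) : G.IsCompleteBetween s' t' :=
  fun _ ha _ hb => h (hs ha) (ht hb)

theorem isClique_union_of_isCompleteBetween {s t : Set V} (hs : G.IsClique s)
    (ht : G.IsClique t) (hst : G.IsCompleteBetween s t) : G.IsClique (s ∪ t) :=
  Set.pairwise_union.2 ⟨hs, ht, fun _ ha _ hb _ => ⟨hst ha hb, (hst ha hb).symm⟩⟩

theorem isIndepSet_union_of_isCompleteBetween_compl {s t : Set V} (hs : G.IsIndepSet s)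
    (ht : G.IsIndepSet t) (hst : Gᶜ.IsCompleteBetween s t) : G.IsIndepSet (s ∪ t) :=
  (isClique_compl G).1 <| isClique_union_of_isCompleteBetween
    ((isClique_compl G).2 hs) ((isClique_compl G).2 ht) hst

theorem subset_or_subset_of_isIndepSet_of_isCompleteBetween [DecidableEq V] {I A B : Finset V}
    (hI : G.IsIndepSet I) (hIAB : I ⊆ A ∪ B) (hAB : G.IsCompleteBetween A B) :
    I ⊆ A ∨ I ⊆ B := by
  by_contra! h
  obtain ⟨⟨a, haI, haA⟩, ⟨b, hbI, hbB⟩⟩ := And.imp not_subset.1 not_subset.1 h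
  have hbA : b ∈ A := (mem_union.1 (hIAB hbI)).resolve_right hbB
  have haB : a ∈ B := (mem_union.1 (hIAB haI)).resolve_left haA
  have hba : G.Adj b a := hAB hbA haB
  exact hI hbI haI hba.ne hba

theorem isClique_of_mem_edgeSet {e : Sym2 V} (he : e ∈ G.edgeSet) :
    G.IsClique {v | v ∈ e} := by
  induction e using Sym2.ind with | _ x y => ?_
  have hxy : {v | v ∈ s(x, y)} = {x, y} := by ext; simp
  rw [hxy]
  exact isClique_pair.2 fun _ => he

theorem coe_subset_of_mem_sym2 {A : Finset V} {e : Sym2 V} (he : e ∈ A.sym2) :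
    {v | v ∈ e} ⊆ ↑A :=
  fun v hv => mem_sym2_iff.1 he v hv

theorem ne_of_mem_sym2_of_mem_sym2 {A B : Finset V} (hAB : Disjoint A B) {e f : Sym2 V}
    (he : e ∈ A.sym2) (hf : f ∈ B.sym2) : e ≠ f := by
  rintro rfl
  exact disjoint_left.1 hAB (mem_sym2_iff.1 he _ e.out_fst_mem) (mem_sym2_iff.1 hf _ e.out_fst_mem)

section indepNum

theorem exists_isIndepSet_card_eq_indepNum_induce (s : Set V) :
    ∃ T : Finset V, ↑T ⊆ s ∧ G.IsIndepSet T ∧ #T = (G.induce s).indepNum := by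
  obtain ⟨T, hT, hcard⟩ := (G.induce s).exists_isNIndepSet_indepNum
  refine ⟨T.map (Function.Embedding.subtype _), by simp, ?_, by rw [card_map, hcard]⟩
  simp only [coe_map, Function.Embedding.coe_subtype]
  rintro _ ⟨x, hx, rfl⟩ _ ⟨y, hy, rfl⟩ hxy
  exact hT hx hy (fun h => hxy (congrArg Subtype.val h))

variable [Finite V]

theorem card_le_indepNum_induce {s : Set V} {T : Finset V} (hTs : ↑T ⊆ s)
    (hT : G.IsIndepSet T) : #T ≤ (G.induce s).indepNum := by
  classical
  rw [← filter_true_of_mem (p := (· ∈ s)) fun x hx => hTs hx, ← card_subtype]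
  refine IsIndepSet.card_le_indepNum fun x hx y hy hxy => ?_
  exact hT (mem_subtype.1 hx) (mem_subtype.1 hy) (Subtype.coe_ne_coe.2 hxy)

theorem indepNum_induce_mono {s t : Set V} (h : s ⊆ t) :
    (G.induce s).indepNum ≤ (G.induce t).indepNum := by
  obtain ⟨T, hTs, hT, hcard⟩ := exists_isIndepSet_card_eq_indepNum_induce (G := G) s
  exact hcard ▸ card_le_indepNum_induce (hTs.trans h) hT

end indepNum

theorem _root_.ECG.indepNum_eq_indepNum {W : Type*} (H : SimpleGraph W) :
    ECG.indepNum H = H.indepNum := by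
  simp only [ECG.indepNum, SimpleGraph.indepNum, isNIndepSet_iff]
  rfl

theorem adj_of_isEmpty_pathGraph_four_embedding (hG : IsEmpty (pathGraph 4 ↪g G))
    {a b c d : V} (hab : G.Adj a b) (hbc : G.Adj b c) (hcd : G.Adj c d)
    (hac : ¬G.Adj a c) (hbd : ¬G.Adj b d) : G.Adj a d := by
  by_contra had
  have hac' : a ≠ c := fun h => had (h ▸ hcd)
  have hbd' : b ≠ d := fun h => had (h ▸ hab)
  have had' : a ≠ d := fun h => hbd (h ▸ hab.symm)
  refine hG.false ⟨⟨![a, b, c, d], fun i j h => ?_⟩, fun {i j} => ?_⟩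
  · fin_cases i <;> fin_cases j <;>
      simp_all [hab.ne, hbc.ne, hcd.ne, hab.ne.symm, hbc.ne.symm, hcd.ne.symm, eq_comm]
  · change G.Adj (![a, b, c, d] i) (![a, b, c, d] j) ↔ _
    fin_cases i <;> fin_cases j <;>
      simp [pathGraph_adj, hab, hbc, hcd, hab.symm, hbc.symm, hcd.symm, hac, hbd, had,
        G.adj_comm c a, G.adj_comm d b, G.adj_comm d a]

theorem isEmpty_pathGraph_four_embedding_compl (hG : IsEmpty (pathGraph 4 ↪g G)) :
    IsEmpty (pathGraph 4 ↪g Gᶜ) := by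
  refine ⟨fun f => ?_⟩
  have hf (i j : Fin 4) : Gᶜ.Adj (f i) (f j) ↔ i.val + 1 = j.val ∨ j.val + 1 = i.val :=
    f.map_adj_iff.trans pathGraph_adj
  have adj (i j : Fin 4) (hij : i ≠ j) (h : ¬(i.val + 1 = j.val ∨ j.val + 1 = i.val)) :
      G.Adj (f i) (f j) := by
    by_contra h'
    exact h ((hf i j).1 ⟨f.injective.ne hij, h'⟩)
  have nadj (i j : Fin 4) (h : i.val + 1 = j.val ∨ j.val + 1 = i.val) : ¬G.Adj (f i) (f j) :=
    ((hf i j).2 h).2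
  -- `P₄` is self-complementary: `f 2 - f 0 - f 3 - f 1` is an induced path of `G`.
  refine nadj 1 2 (by decide) (adj_of_isEmpty_pathGraph_four_embedding hG
    (adj 2 0 (by decide) (by decide)) (adj 0 3 (by decide) (by decide))
    (adj 3 1 (by decide) (by decide)) (nadj 2 3 (by decide)) (nadj 0 1 (by decide))).symm

def IsJoinOrUnion [DecidableEq V] (G : SimpleGraph V) (U A B : Finset V) : Prop :=
  A ∪ B = U ∧ A.Nonempty ∧ B.Nonempty ∧
    (G.IsCompleteBetween A B ∨ Gᶜ.IsCompleteBetween A B)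

theorem isJoinOrUnion_compl [DecidableEq V] {U A B : Finset V} :
    IsJoinOrUnion Gᶜ U A B ↔ IsJoinOrUnion G U A B := by
  simp only [IsJoinOrUnion, compl_compl, or_comm]

/-- Adjacent `x` and `y` lie on one side, and with a neighbour `z` of `v` on the other side
`y - x - v - z` would be an induced path. -/
theorem not_adj_of_isCompleteBetween_compl [DecidableEq V] (hG : IsEmpty (pathGraph 4 ↪g G))
    {A B : Finset V} (hAB : Gᶜ.IsCompleteBetween A B) {a b v x y : V} (ha : a ∈ A)
    (hva : G.Adj v a) (hb : b ∈ B) (hvb : G.Adj v b) (hx : x ∈ A ∪ B) (hy : y ∈ A ∪ B)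
    (hvx : G.Adj v x) (hvy : ¬G.Adj v y) : ¬G.Adj x y := by
  intro hxy
  obtain ⟨z, hvz, hxz, hyz⟩ : ∃ z, G.Adj v z ∧ ¬G.Adj x z ∧ ¬G.Adj y z := by
    rcases mem_union.1 hx with hx | hx <;> rcases mem_union.1 hy with hy | hy
    · exact ⟨b, hvb, (hAB hx hb).2, (hAB hy hb).2⟩
    · exact absurd hxy (hAB hx hy).2
    · exact absurd hxy.symm (hAB hy hx).2
    · exact ⟨a, hva, fun h => (hAB ha hx).2 h.symm, fun h => (hAB ha hy).2 h.symm⟩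
  exact hyz (adj_of_isEmpty_pathGraph_four_embedding hG hxy.symm hvx.symm hvz
    (fun h => hvy h.symm) hxz)

theorem exists_isJoinOrUnion_insert [DecidableEq V] (hG : IsEmpty (pathGraph 4 ↪g G))
    {A B : Finset V} {v : V} (hA : A.Nonempty) (hB : B.Nonempty)
    (hAB : Gᶜ.IsCompleteBetween A B) (hv : v ∉ A ∪ B) :
    ∃ A' B', IsJoinOrUnion G (insert v (A ∪ B)) A' B' := by
  have hvA : v ∉ A := fun h => hv (mem_union_left B h)
  have hvB : v ∉ B := fun h => hv (mem_union_right A h)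
  by_cases hNA : ∀ a ∈ A, ¬G.Adj v a
  · refine ⟨A, insert v B, by rw [union_insert], hA, insert_nonempty v B, Or.inr ?_⟩
    intro a ha w hw
    obtain rfl | hw := mem_insert.1 hw
    · exact ⟨fun h => hvA (h ▸ ha), fun h => hNA a ha h.symm⟩
    · exact hAB ha hw
  by_cases hNB : ∀ b ∈ B, ¬G.Adj v b
  · refine ⟨insert v A, B, by rw [insert_union], insert_nonempty v A, hB, Or.inr ?_⟩
    intro w hw b hb
    obtain rfl | hw := mem_insert.1 hw
    · exact ⟨fun h => hvB (h ▸ hb), hNB b hb⟩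
    · exact hAB hw hb
  push Not at hNA hNB
  obtain ⟨a, ha, hva⟩ := hNA
  obtain ⟨b, hb, hvb⟩ := hNB
  classical
  obtain hM | hM := ((A ∪ B).filter fun u => ¬G.Adj v u).eq_empty_or_nonempty
  · refine ⟨{v}, A ∪ B, by rw [insert_eq], singleton_nonempty v, hA.mono subset_union_left,
      Or.inl ?_⟩
    intro w hw u hu
    rw [coe_singleton, Set.mem_singleton_iff] at hw
    subst hw
    by_contra h
    exact (filter_eq_empty_iff.1 hM) hu h
  · refine ⟨insert v ((A ∪ B).filter (G.Adj v)), (A ∪ B).filter fun u => ¬G.Adj v u,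
      by rw [insert_union, filter_union_filter_not_eq], insert_nonempty _ _, hM, Or.inr ?_⟩
    intro x hx y hy
    rw [coe_filter] at hy
    obtain ⟨hyU, hvy⟩ := hy
    obtain rfl | hx := mem_insert.1 hx
    · exact ⟨fun h => hv (h ▸ hyU), hvy⟩
    · obtain ⟨hxU, hvx⟩ := mem_filter.1 hx
      exact ⟨fun h => hvy (h ▸ hvx),
        not_adj_of_isCompleteBetween_compl hG hAB ha hva hb hvb hxU hyU hvx hvy⟩

theorem exists_isJoinOrUnion [DecidableEq V] (hG : IsEmpty (pathGraph 4 ↪g G)) {U : Finset V}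
    (hU : 1 < #U) : ∃ A B, IsJoinOrUnion G U A B := by
  induction U using Finset.induction_on with
  | empty => simp at hU
  | insert v U hv ih =>
    rw [card_insert_of_notMem hv] at hU
    obtain hU1 | hU1 := (Nat.lt_succ_iff.1 hU).eq_or_lt
    · obtain ⟨u, rfl⟩ := card_eq_one.1 hU1.symm
      have hvu : v ≠ u := fun h => hv (h ▸ mem_singleton_self v)
      refine ⟨{v}, {u}, by rw [insert_eq], singleton_nonempty v, singleton_nonempty u, ?_⟩
      simp only [coe_singleton, IsCompleteBetween, Set.mem_singleton_iff, forall_eq, compl_adj]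
      tauto
    obtain ⟨A, B, rfl, hA, hB, hAB | hAB⟩ := ih hU1
    · have hGc := isEmpty_pathGraph_four_embedding_compl hG
      obtain ⟨A', B', h⟩ := exists_isJoinOrUnion_insert hGc hA hB (by rwa [compl_compl]) hv
      exact ⟨A', B', isJoinOrUnion_compl.1 h⟩
    · exact exists_isJoinOrUnion_insert hG hA hB hAB hv

open Classical in
noncomputable def maxCliqueWeight (G : SimpleGraph V) (S : Finset V) (m : V → ℕ) : ℕ :=
  (S.powerset.filter fun Q : Finset V => G.IsClique (Q : Set V)).sup fun Q => ∑ a ∈ Q, m a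

section maxCliqueWeight

variable {S T Q : Finset V} {m : V → ℕ}

theorem sum_le_maxCliqueWeight (hQS : Q ⊆ S) (hQ : G.IsClique (Q : Set V)) :
    ∑ a ∈ Q, m a ≤ maxCliqueWeight G S m := by
  classical
  unfold maxCliqueWeight
  exact le_sup (f := fun Q => ∑ a ∈ Q, m a) (mem_filter.2 ⟨mem_powerset.2 hQS, hQ⟩)

theorem exists_isClique_sum_eq_maxCliqueWeight (S : Finset V) (m : V → ℕ) :
    ∃ Q ⊆ S, G.IsClique (Q : Set V) ∧ ∑ a ∈ Q, m a = maxCliqueWeight G S m := by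
  classical
  unfold maxCliqueWeight
  obtain ⟨Q, hQ, h⟩ := exists_mem_eq_sup (S.powerset.filter fun Q : Finset V => G.IsClique ↑Q)
    ⟨∅, mem_filter.2 ⟨empty_mem_powerset S, by simp⟩⟩ fun Q => ∑ a ∈ Q, m a
  exact ⟨Q, mem_powerset.1 (mem_filter.1 hQ).1, (mem_filter.1 hQ).2, h.symm⟩

theorem maxCliqueWeight_mono (h : S ⊆ T) : maxCliqueWeight G S m ≤ maxCliqueWeight G T m := by
  obtain ⟨Q, hQS, hQ, hsum⟩ := exists_isClique_sum_eq_maxCliqueWeight (G := G) S m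
  exact hsum ▸ sum_le_maxCliqueWeight (hQS.trans h) hQ

theorem le_maxCliqueWeight {a : V} (ha : a ∈ S) : m a ≤ maxCliqueWeight G S m := by
  simpa using sum_le_maxCliqueWeight (G := G) (m := m) (singleton_subset_iff.2 ha)
    (by rw [coe_singleton]; exact Set.pairwise_singleton _ _)

theorem maxCliqueWeight_add_le [DecidableEq V] (hST : G.IsCompleteBetween S T) :
    maxCliqueWeight G S m + maxCliqueWeight G T m ≤ maxCliqueWeight G (S ∪ T) m := by
  obtain ⟨Q, hQS, hQ, hQm⟩ := exists_isClique_sum_eq_maxCliqueWeight (G := G) S m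
  obtain ⟨R, hRT, hR, hRm⟩ := exists_isClique_sum_eq_maxCliqueWeight (G := G) T m
  have hQR : G.IsCompleteBetween Q R := hST.mono (coe_subset.2 hQS) (coe_subset.2 hRT)
  rw [← hQm, ← hRm, ← sum_union (disjoint_coe.1 hQR.disjoint)]
  refine sum_le_maxCliqueWeight (union_subset_union hQS hRT) ?_
  rw [coe_union]
  exact isClique_union_of_isCompleteBetween hQ hR hQR

end maxCliqueWeight

theorem exists_isIndepSet_sum_le_card_mul_maxCliqueWeight [DecidableEq V]
    (hG : IsEmpty (pathGraph 4 ↪g G)) (S : Finset V) (m : V → ℕ) :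
    ∃ I ⊆ S, G.IsIndepSet I ∧ ∑ a ∈ S, m a ≤ #I * maxCliqueWeight G S m := by
  induction S using Finset.strongInduction with | H S ih => ?_
  rcases le_or_gt #S 1 with hS | hS
  · refine ⟨S, subset_rfl, (card_le_one_iff_subsingleton.1 hS).pairwise _, ?_⟩
    calc ∑ a ∈ S, m a ≤ ∑ _ ∈ S, maxCliqueWeight G S m :=
          sum_le_sum fun a => le_maxCliqueWeight
      _ = #S * maxCliqueWeight G S m := by rw [sum_const, smul_eq_mul]
  obtain ⟨A, B, rfl, hA, hB, hsplit⟩ := exists_isJoinOrUnion hG hS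
  have hdisj : Disjoint A B := by
    rcases hsplit with h | h <;> exact disjoint_coe.1 h.disjoint
  obtain ⟨IA, hIA, hIAi, hsA⟩ := ih A (ssubset_union_left_of_disjoint hdisj hB)
  obtain ⟨IB, hIB, hIBi, hsB⟩ := ih B (ssubset_union_right_of_disjoint hdisj hA)
  have hsum : ∑ a ∈ A ∪ B, m a ≤
      #IA * maxCliqueWeight G A m + #IB * maxCliqueWeight G B m := by
    rw [sum_union hdisj]; exact add_le_add hsA hsB
  rcases hsplit with hAB | hAB
  · -- the larger of `IA`, `IB` works, since the clique weights of `A` and `B` add up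
    obtain ⟨I, hI, hIi, hAI, hBI⟩ :
        ∃ I ⊆ A ∪ B, G.IsIndepSet I ∧ #IA ≤ #I ∧ #IB ≤ #I := by
      rcases le_total #IA #IB with hle | hle
      · exact ⟨IB, hIB.trans subset_union_right, hIBi, hle, le_rfl⟩
      · exact ⟨IA, hIA.trans subset_union_left, hIAi, le_rfl, hle⟩
    refine ⟨I, hI, hIi, ?_⟩
    calc ∑ a ∈ A ∪ B, m a
        ≤ #IA * maxCliqueWeight G A m + #IB * maxCliqueWeight G B m := hsum
      _ ≤ #I * maxCliqueWeight G A m + #I * maxCliqueWeight G B m := by gcongr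
      _ ≤ #I * maxCliqueWeight G (A ∪ B) m := by
        rw [← mul_add]; exact Nat.mul_le_mul_left _ (maxCliqueWeight_add_le hAB)
  · refine ⟨IA ∪ IB, union_subset_union hIA hIB, ?_, ?_⟩
    · rw [coe_union]
      exact isIndepSet_union_of_isCompleteBetween_compl hIAi hIBi
        (hAB.mono (coe_subset.2 hIA) (coe_subset.2 hIB))
    calc ∑ a ∈ A ∪ B, m a
        ≤ #IA * maxCliqueWeight G A m + #IB * maxCliqueWeight G B m := hsum
      _ ≤ #IA * maxCliqueWeight G (A ∪ B) m + #IB * maxCliqueWeight G (A ∪ B) m := by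
        gcongr <;> exact maxCliqueWeight_mono (by simp)
      _ = #(IA ∪ IB) * maxCliqueWeight G (A ∪ B) m := by
        rw [card_union_of_disjoint (hdisj.mono hIA hIB), add_mul]

def commonCliqueGraph (G : SimpleGraph V) : SimpleGraph (Sym2 V) where
  Adj e f := e ≠ f ∧ G.IsClique {v | v ∈ e ∨ v ∈ f}
  symm := ⟨fun _ _ h => ⟨h.1.symm, by simpa only [or_comm] using h.2⟩⟩
  loopless := ⟨fun _ h => h.1 rfl⟩

theorem edgeCliqueGraph_eq_induce :
    ECG.edgeCliqueGraph G = (commonCliqueGraph G).induce G.edgeSet := by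
  ext e f
  simp [ECG.edgeCliqueGraph, commonCliqueGraph, Subtype.ext_iff]

/-- A vertex `a` of weight `m a` stands for `m a` edges from `a` to vertices outside `U` that
are adjacent to all of `U`; hence it may not form a clique with an edge of `F`. -/
structure IsCliquePacking (G : SimpleGraph V) (U : Finset V) (F : Finset (Sym2 V))
    (m : V → ℕ) : Prop where
  subset_sym2 : F ⊆ U.sym2
  subset_edgeSet : (F : Set (Sym2 V)) ⊆ G.edgeSet
  isIndepSet : (commonCliqueGraph G).IsIndepSet F
  not_isClique_insert :
    ∀ a ∈ U, m a ≠ 0 → ∀ e ∈ F, ¬G.IsClique (insert a {v | v ∈ e})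

namespace IsCliquePacking

theorem eq_empty_of_card_le_one {U : Finset V} {F : Finset (Sym2 V)} {m : V → ℕ}
    (hP : IsCliquePacking G U F m) (hU : #U ≤ 1) : F = ∅ := by
  refine eq_empty_of_forall_notMem fun e he => G.not_isDiag_of_mem_edgeSet
    (hP.subset_edgeSet he) ?_
  induction e using Sym2.ind with | _ x y => ?_
  obtain ⟨hx, hy⟩ := mk_mem_sym2_iff.1 (hP.subset_sym2 he)
  exact Sym2.mk_isDiag_iff.2 (card_le_one.1 hU x hx y hy)

variable [DecidableEq V] {U A B I : Finset V} {F : Finset (Sym2 V)} {m : V → ℕ}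

theorem restrict (hP : IsCliquePacking G U F m) (hA : A ⊆ U) :
    IsCliquePacking G A (F ∩ A.sym2) m where
  subset_sym2 := inter_subset_right
  subset_edgeSet := (coe_subset.2 inter_subset_left).trans hP.subset_edgeSet
  isIndepSet := hP.isIndepSet.mono (coe_subset.2 inter_subset_left)
  not_isClique_insert a ha hm e he :=
    hP.not_isClique_insert a (hA ha) hm e (mem_of_mem_inter_left he)

theorem weight_eq_zero_of_mem_sym2 (hP : IsCliquePacking G (A ∪ B) F m)
    (hAB : G.IsCompleteBetween A B) {e : Sym2 V} (he : e ∈ F) (heB : e ∈ B.sym2) {a : V}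
    (ha : a ∈ A) : m a = 0 := by
  by_contra hm
  refine hP.not_isClique_insert a (mem_union_left B ha) hm e he ?_
  rw [Set.insert_eq]
  exact isClique_union_of_isCompleteBetween (Set.pairwise_singleton _ _)
    (isClique_of_mem_edgeSet (hP.subset_edgeSet he))
    (hAB.mono (by simpa using ha) (coe_subset_of_mem_sym2 heB))

theorem notMem_sym2_of_mem_sym2 (hP : IsCliquePacking G (A ∪ B) F m)
    (hAB : G.IsCompleteBetween A B) {e : Sym2 V} (he : e ∈ F) (heB : e ∈ B.sym2) {f : Sym2 V}
    (hf : f ∈ F) : f ∉ A.sym2 := by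
  intro hfA
  have hne := ne_of_mem_sym2_of_mem_sym2 (disjoint_coe.1 hAB.disjoint) hfA heB
  refine hP.isIndepSet hf he hne ⟨hne, ?_⟩
  exact isClique_union_of_isCompleteBetween (isClique_of_mem_edgeSet (hP.subset_edgeSet hf))
    (isClique_of_mem_edgeSet (hP.subset_edgeSet he))
    (hAB.mono (coe_subset_of_mem_sym2 hfA) (coe_subset_of_mem_sym2 heB))

/-- A weighted vertex `a ∈ A` would form a clique with the edge `s(a', b)`. -/
theorem not_isClique_pair (hP : IsCliquePacking G (A ∪ B) F m) (hAB : G.IsCompleteBetween A B)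
    {a a' b : V} (ha : a ∈ A) (hm : m a ≠ 0) (ha' : a' ∈ A) (hb : b ∈ B)
    (hab : s(a', b) ∈ F) : ¬G.IsClique {a, a'} := by
  intro haa
  refine hP.not_isClique_insert a (mem_union_left B ha) hm _ hab ?_
  have hC := isClique_union_of_isCompleteBetween haa (Set.pairwise_singleton b G.Adj)
    (hAB.mono (Set.insert_subset_iff.2 ⟨ha, Set.singleton_subset_iff.2 ha'⟩)
      (by simpa using hb))
  refine hC.subset fun v => ?_
  simp only [Set.mem_ofPred_eq, Sym2.mem_iff, Set.mem_union, Set.mem_insert_iff,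
    Set.mem_singleton_iff]
  tauto

end IsCliquePacking

section crossEdges

variable [DecidableEq V] {A B Q : Finset V} {F : Finset (Sym2 V)}

theorem card_eq_card_inter_sym2_add_card_inter_sym2 (hFU : F ⊆ (A ∪ B).sym2)
    (hFE : (F : Set (Sym2 V)) ⊆ G.edgeSet) (hAB : Gᶜ.IsCompleteBetween A B) :
    #F = #(F ∩ A.sym2) + #(F ∩ B.sym2) := by
  have hdisj : Disjoint (F ∩ A.sym2) (F ∩ B.sym2) := disjoint_left.2 fun e he he' =>
    ne_of_mem_sym2_of_mem_sym2 (disjoint_coe.1 hAB.disjoint) (mem_inter.1 he).2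
      (mem_inter.1 he').2 rfl
  rw [← card_union_of_disjoint hdisj, ← inter_union_distrib_left, inter_eq_left.2]
  intro e he
  induction e using Sym2.ind with | _ x y => ?_
  have hxy : G.Adj x y := hFE he
  obtain ⟨hx, hy⟩ := mk_mem_sym2_iff.1 (hFU he)
  rw [mem_union, mk_mem_sym2_iff, mk_mem_sym2_iff]
  rcases mem_union.1 hx with hx | hx <;> rcases mem_union.1 hy with hy | hy
  · exact Or.inl ⟨hx, hy⟩
  · exact absurd hxy (hAB hx hy).2
  · exact absurd hxy.symm (hAB hy hx).2
  · exact Or.inr ⟨hx, hy⟩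

theorem card_eq_card_inter_sym2_add_sum (hFU : F ⊆ (A ∪ B).sym2)
    (hFB : ∀ e ∈ F, e ∉ B.sym2) (hAB : Disjoint A B) :
    #F = #(F ∩ A.sym2) + ∑ a ∈ A, #{b ∈ B | s(a, b) ∈ F} := by
  rw [← card_inter_add_card_sdiff F A.sym2, ← card_sigma]
  congr 1
  symm
  refine card_nbij (fun p => s(p.1, p.2)) ?_ ?_ ?_
  · rintro ⟨a, b⟩ hp
    simp only [coe_sigma, Set.mem_sigma_iff, mem_coe, mem_filter] at hp
    exact mem_sdiff.2 ⟨hp.2.2, fun h => disjoint_left.1 hAB (mk_mem_sym2_iff.1 h).2 hp.2.1⟩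
  · rintro ⟨a, b⟩ hp ⟨a', b'⟩ hq h
    simp only [coe_sigma, Set.mem_sigma_iff, mem_coe, mem_filter] at hp hq
    rcases Sym2.eq_iff.1 h with ⟨rfl, rfl⟩ | ⟨rfl, -⟩
    · rfl
    · exact absurd hq.2.1 (disjoint_left.1 hAB hp.1)
  · intro e he
    rw [mem_coe, mem_sdiff] at he
    induction e using Sym2.ind with | _ x y => ?_
    obtain ⟨hx, hy⟩ := mk_mem_sym2_iff.1 (hFU he.1)
    rcases mem_union.1 hx with hx | hx <;> rcases mem_union.1 hy with hy | hy
    · exact absurd (mk_mem_sym2_iff.2 ⟨hx, hy⟩) he.2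
    · exact ⟨⟨x, y⟩, by simp [hx, hy, he.1], rfl⟩
    · exact ⟨⟨y, x⟩, by simp [hx, hy, Sym2.eq_swap, he.1], Sym2.eq_swap⟩
    · exact absurd (mk_mem_sym2_iff.2 ⟨hx, hy⟩) (hFB _ he.1)

theorem sum_card_filter_le_indepNum_induce [Finite V]
    (hF : (commonCliqueGraph G).IsIndepSet F) (hQ : G.IsClique (Q : Set V))
    (hQB : G.IsCompleteBetween Q B) :
    ∑ a ∈ Q, #{b ∈ B | s(a, b) ∈ F} ≤ (G.induce B).indepNum := by
  rw [← card_sigma]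
  set P := Q.sigma fun a => {b ∈ B | s(a, b) ∈ F}
  -- two edges of `F` from `Q` with equal or adjacent ends in `B` would lie in a common clique
  have key : ∀ p ∈ P, ∀ q ∈ P, p ≠ q → p.2 ≠ q.2 ∧ ¬G.Adj p.2 q.2 := by
    rintro ⟨a, b⟩ hp ⟨a', b'⟩ hq hne
    simp only [P, mem_sigma, mem_filter] at hp hq
    have hedge : s(a, b) ≠ s(a', b') := by
      intro h
      rcases Sym2.eq_iff.1 h with ⟨rfl, rfl⟩ | ⟨rfl, -⟩
      · exact hne rfl
      · exact disjoint_left.1 (disjoint_coe.1 hQB.disjoint) hp.1 hq.2.1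
    rw [← not_or]
    intro hbb
    refine hF hp.2.2 hq.2.2 hedge ⟨hedge, ?_⟩
    have haQ : ({a, a'} : Set V) ⊆ Q :=
      Set.insert_subset_iff.2 ⟨hp.1, Set.singleton_subset_iff.2 hq.1⟩
    have hbB : ({b, b'} : Set V) ⊆ B :=
      Set.insert_subset_iff.2 ⟨hp.2.1, Set.singleton_subset_iff.2 hq.2.1⟩
    refine (isClique_union_of_isCompleteBetween (hQ.subset haQ)
      (isClique_pair.2 hbb.resolve_left) (hQB.mono haQ hbB)).subset fun v => ?_
    simp only [Set.mem_ofPred_eq, Sym2.mem_iff, Set.mem_union, Set.mem_insert_iff,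
      Set.mem_singleton_iff]
    tauto
  have hinj : Set.InjOn Sigma.snd (P : Set _) := fun p hp q hq h =>
    by_contra fun hne => (key p hp q hq hne).1 h
  rw [← card_image_of_injOn hinj]
  refine card_le_indepNum_induce (fun b hb => ?_) fun b hb b' hb' hne => ?_
  · obtain ⟨p, hp, rfl⟩ := mem_image.1 hb
    exact (mem_filter.1 (mem_sigma.1 hp).2).1
  · obtain ⟨p, hp, rfl⟩ := mem_image.1 hb
    obtain ⟨q, hq, rfl⟩ := mem_image.1 hb'
    exact (key p hp q hq fun h => hne (h ▸ rfl)).2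

end crossEdges

def joinWeight [DecidableEq V] (F : Finset (Sym2 V)) (B I : Finset V) (k : ℕ) (a : V) : ℕ :=
  (if a ∈ I then k else 0) + #{b ∈ B | s(a, b) ∈ F}

section joinWeight

variable [DecidableEq V] {A B I S : Finset V} {F : Finset (Sym2 V)} {m : V → ℕ} {k : ℕ}

theorem sum_joinWeight (S : Finset V) :
    ∑ a ∈ S, joinWeight F B I k a =
      #(S ∩ I) * k + ∑ a ∈ S, #{b ∈ B | s(a, b) ∈ F} := by
  simp only [joinWeight, sum_add_distrib, sum_ite_mem, sum_const, smul_eq_mul]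

theorem IsCliquePacking.join (hP : IsCliquePacking G (A ∪ B) F m)
    (hAB : G.IsCompleteBetween A B) (hIm : ∀ a ∈ I, m a ≠ 0) :
    IsCliquePacking G A (F ∩ A.sym2) (joinWeight F B I k) := by
  refine { hP.restrict subset_union_left with not_isClique_insert := ?_ }
  intro a ha hm e he hcl
  obtain ⟨heF, heA⟩ := mem_inter.1 he
  by_cases haI : a ∈ I
  · exact hP.not_isClique_insert a (mem_union_left B ha) (hIm a haI) e heF hcl
  obtain ⟨b, hb, hab⟩ : ∃ b ∈ B, s(a, b) ∈ F := by
    simpa [joinWeight, haI, filter_eq_empty_iff] using hm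
  -- `e` and the cross edge `s(a, b)` would lie in a common clique
  have hne : e ≠ s(a, b) := fun h =>
    disjoint_left.1 (disjoint_coe.1 hAB.disjoint)
      (mem_sym2_iff.1 heA b (h ▸ Sym2.mem_mk_right a b)) hb
  refine hP.isIndepSet heF hab hne ⟨hne, ?_⟩
  have hC := isClique_union_of_isCompleteBetween hcl (Set.pairwise_singleton b G.Adj)
    (hAB.mono (Set.insert_subset ha (coe_subset_of_mem_sym2 heA)) (by simpa using hb))
  refine hC.subset fun v => ?_
  simp only [Set.mem_ofPred_eq, Sym2.mem_iff, Set.mem_union, Set.mem_insert_iff,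
    Set.mem_singleton_iff]
  tauto

theorem maxCliqueWeight_joinWeight_le [Finite V] (hP : IsCliquePacking G (A ∪ B) F m)
    (hAB : G.IsCompleteBetween A B) (hIA : I ⊆ A) (hI : G.IsIndepSet I)
    (hIm : ∀ a ∈ I, m a ≠ 0) :
    maxCliqueWeight G A (joinWeight F B I k) ≤ max k (G.induce B).indepNum := by
  obtain ⟨Q, hQA, hQ, hsum⟩ := exists_isClique_sum_eq_maxCliqueWeight (G := G) A
    (joinWeight F B I k)
  rw [← hsum, sum_joinWeight]
  by_cases hX : ∃ a ∈ Q, ∃ b ∈ B, s(a, b) ∈ F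
  · obtain ⟨a', ha', b, hb, hab⟩ := hX
    have hQI : Q ∩ I = ∅ := eq_empty_of_forall_notMem fun a ha =>
      hP.not_isClique_pair hAB (hIA (mem_inter.1 ha).2) (hIm a (mem_inter.1 ha).2) (hQA ha') hb
        hab (hQ.subset (Set.insert_subset_iff.2
          ⟨(mem_inter.1 ha).1, Set.singleton_subset_iff.2 ha'⟩))
    rw [hQI, card_empty, zero_mul, zero_add]
    exact (sum_card_filter_le_indepNum_induce hP.isIndepSet hQ
      (hAB.mono (coe_subset.2 hQA) subset_rfl)).trans (le_max_right _ _)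
  · push Not at hX
    have hcross : ∑ a ∈ Q, #{b ∈ B | s(a, b) ∈ F} = 0 :=
      sum_eq_zero fun a ha => card_eq_zero.2 (filter_eq_empty_iff.2 (hX a ha))
    have hQI : #(Q ∩ I) ≤ 1 := card_le_one.2 fun x hx y hy => by
      by_contra hne
      rw [mem_inter] at hx hy
      exact hI hx.2 hy.2 hne (hQ hx.1 hy.1 hne)
    rw [hcross, add_zero]
    calc #(Q ∩ I) * k ≤ 1 * k := Nat.mul_le_mul_right k hQI
      _ ≤ max k (G.induce B).indepNum := by rw [one_mul]; exact le_max_left _ _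

end joinWeight

def LeIndepSum (G : SimpleGraph V) (U : Finset V) (k n : ℕ) : Prop :=
  ∃ W ⊆ U, G.IsIndepSet W ∧ n ≤ ∑ x ∈ W, max (G.induce (G.neighborSet x)).indepNum k

namespace LeIndepSum

variable {U A B : Finset V} {k n n' : ℕ}

theorem mono (h : LeIndepSum G U k n) (hn : n' ≤ n) : LeIndepSum G U k n' :=
  let ⟨W, hWU, hW, hle⟩ := h
  ⟨W, hWU, hW, hn.trans hle⟩

theorem of_isIndepSet (hU : G.IsIndepSet U) : LeIndepSum G U k (#U * k) := by
  refine ⟨U, subset_rfl, hU, ?_⟩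
  rw [← smul_eq_mul, ← sum_const]
  exact sum_le_sum fun x _ => le_max_right _ _

theorem union_of_isCompleteBetween_compl [DecidableEq V] {nA nB : ℕ}
    (hA : LeIndepSum G A k nA) (hB : LeIndepSum G B k nB) (hAB : Gᶜ.IsCompleteBetween A B) :
    LeIndepSum G (A ∪ B) k (nA + nB) := by
  obtain ⟨WA, hWA, hWAi, hA⟩ := hA
  obtain ⟨WB, hWB, hWBi, hB⟩ := hB
  refine ⟨WA ∪ WB, union_subset_union hWA hWB, ?_, ?_⟩
  · rw [coe_union]
    exact isIndepSet_union_of_isCompleteBetween_compl hWAi hWBi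
      (hAB.mono (coe_subset.2 hWA) (coe_subset.2 hWB))
  · rw [sum_union (disjoint_coe.1 (hAB.mono (coe_subset.2 hWA) (coe_subset.2 hWB)).disjoint)]
    exact add_le_add hA hB

theorem union_of_isCompleteBetween [Finite V] [DecidableEq V]
    (h : LeIndepSum G A (max k (G.induce B).indepNum) n) (hAB : G.IsCompleteBetween A B) :
    LeIndepSum G (A ∪ B) k n := by
  obtain ⟨W, hWA, hW, hle⟩ := h
  refine ⟨W, hWA.trans subset_union_left, hW, hle.trans_eq (sum_congr rfl fun x hx => ?_)⟩
  -- `x ∈ A` sees all of `B`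
  have : (G.induce B).indepNum ≤ (G.induce (G.neighborSet x)).indepNum :=
    indepNum_induce_mono fun b hb => hAB (mem_coe.2 (hWA hx)) hb
  omega

end LeIndepSum

namespace IsCliquePacking

variable [DecidableEq V] {U A B I : Finset V} {F : Finset (Sym2 V)} {m : V → ℕ} {k : ℕ}

/-- An edge of `F` inside `B` rules out weight on `A` and edges inside `A`. -/
theorem exists_side (hP : IsCliquePacking G (A ∪ B) F m) (hAB : G.IsCompleteBetween A B)
    (hIU : I ⊆ A ∪ B) (hI : G.IsIndepSet I) (hIm : ∀ a ∈ I, m a ≠ 0) :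
    (I ⊆ A ∧ ∀ e ∈ F, e ∉ B.sym2) ∨ (I ⊆ B ∧ ∀ e ∈ F, e ∉ A.sym2) := by
  have key : ∀ {A B : Finset V}, IsCliquePacking G (A ∪ B) F m → G.IsCompleteBetween A B →
      I ⊆ A → (∀ e ∈ F, e ∉ B.sym2) ∨ (I ⊆ B ∧ ∀ e ∈ F, e ∉ A.sym2) := by
    intro A B hP hAB hIA
    refine or_iff_not_imp_left.2 fun h => ?_
    push Not at h
    obtain ⟨e, he, heB⟩ := h
    exact ⟨fun a ha => absurd (hP.weight_eq_zero_of_mem_sym2 hAB he heB (hIA ha)) (hIm a ha),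
      fun f hf => hP.notMem_sym2_of_mem_sym2 hAB he heB hf⟩
  rcases subset_or_subset_of_isIndepSet_of_isCompleteBetween hI hIU hAB with hIA | hIB
  · exact (key hP hAB hIA).imp_left (⟨hIA, ·⟩)
  · rw [union_comm] at hP
    exact ((key hP hAB.symm hIB).imp_left (⟨hIB, ·⟩)).symm

theorem leIndepSum_of_isCompleteBetween [Finite V] (hP : IsCliquePacking G (A ∪ B) F m)
    (hAB : G.IsCompleteBetween A B) (hFB : ∀ e ∈ F, e ∉ B.sym2) (hIA : I ⊆ A)
    (hI : G.IsIndepSet I) (hIm : ∀ a ∈ I, m a ≠ 0) (hsum : ∑ a ∈ A ∪ B, m a ≤ #I * k)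
    (ih : ∀ {F' : Finset (Sym2 V)} {m' : V → ℕ} {k' : ℕ}, IsCliquePacking G A F' m' →
      maxCliqueWeight G A m' ≤ k' → LeIndepSum G A k' (#F' + ∑ a ∈ A, m' a)) :
    LeIndepSum G (A ∪ B) k (#F + ∑ a ∈ A ∪ B, m a) := by
  have h := ih (hP.join hAB hIm) (maxCliqueWeight_joinWeight_le (k := k) hP hAB hIA hI hIm)
  rw [sum_joinWeight, inter_eq_right.2 hIA] at h
  refine (h.union_of_isCompleteBetween hAB).mono ?_
  rw [card_eq_card_inter_sym2_add_sum hP.subset_sym2 hFB (disjoint_coe.1 hAB.disjoint)]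
  omega

theorem leIndepSum [Finite V] (hG : IsEmpty (pathGraph 4 ↪g G))
    (hP : IsCliquePacking G U F m) (hk : maxCliqueWeight G U m ≤ k) :
    LeIndepSum G U k (#F + ∑ a ∈ U, m a) := by
  induction U using Finset.strongInduction generalizing F m k with | H U ih => ?_
  rcases le_or_gt #U 1 with hU | hU
  · refine (LeIndepSum.of_isIndepSet ((card_le_one_iff_subsingleton.1 hU).pairwise _)).mono ?_
    rw [hP.eq_empty_of_card_le_one hU, card_empty, zero_add, ← smul_eq_mul, ← sum_const]
    exact sum_le_sum fun a ha => (le_maxCliqueWeight ha).trans hk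
  obtain ⟨A, B, rfl, hA, hB, hAB | hAB⟩ := exists_isJoinOrUnion hG hU
  · have hdisj : Disjoint A B := disjoint_coe.1 hAB.disjoint
    obtain ⟨I, hIsub, hI, hsum⟩ := exists_isIndepSet_sum_le_card_mul_maxCliqueWeight hG
      ((A ∪ B).filter (m · ≠ 0)) m
    rw [sum_filter_ne_zero] at hsum
    replace hsum := hsum.trans <| Nat.mul_le_mul_left #I <|
      (maxCliqueWeight_mono (filter_subset _ _)).trans hk
    have hIm : ∀ a ∈ I, m a ≠ 0 := fun a ha => (mem_filter.1 (hIsub ha)).2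
    rcases hP.exists_side hAB (hIsub.trans (filter_subset _ _)) hI hIm with
      ⟨hIA, hFB⟩ | ⟨hIB, hFA⟩
    · exact hP.leIndepSum_of_isCompleteBetween hAB hFB hIA hI hIm hsum
        (ih A (ssubset_union_left_of_disjoint hdisj hB))
    · rw [union_comm] at hP hsum ⊢
      exact hP.leIndepSum_of_isCompleteBetween hAB.symm hFA hIB hI hIm hsum
        (ih B (ssubset_union_right_of_disjoint hdisj hA))
  · have hdisj : Disjoint A B := disjoint_coe.1 hAB.disjoint
    rw [card_eq_card_inter_sym2_add_card_inter_sym2 hP.subset_sym2 hP.subset_edgeSet hAB,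
      sum_union hdisj, add_add_add_comm]
    exact LeIndepSum.union_of_isCompleteBetween_compl
      (ih A (ssubset_union_left_of_disjoint hdisj hB) (hP.restrict subset_union_left)
        ((maxCliqueWeight_mono subset_union_left).trans hk))
      (ih B (ssubset_union_right_of_disjoint hdisj hA) (hP.restrict subset_union_right)
        ((maxCliqueWeight_mono subset_union_right).trans hk)) hAB

end IsCliquePacking

theorem sum_indepNum_le_indepNum_commonCliqueGraph [Finite V] [DecidableEq V] {W : Finset V}
    (hW : G.IsIndepSet W) :
    ∑ x ∈ W, (G.induce (G.neighborSet x)).indepNum ≤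
      ((commonCliqueGraph G).induce G.edgeSet).indepNum := by
  choose T hTN hT hcard using fun x =>
    exists_isIndepSet_card_eq_indepNum_induce (G := G) (G.neighborSet x)
  set P := W.sigma T
  have key : ∀ p ∈ P, ∀ q ∈ P, p ≠ q → s(p.1, p.2) ≠ s(q.1, q.2) ∧
      ¬G.IsClique {v | v ∈ s(p.1, p.2) ∨ v ∈ s(q.1, q.2)} := by
    rintro ⟨x, y⟩ hp ⟨x', y'⟩ hq hne
    simp only [P, mem_sigma] at hp hq
    have hxy : G.Adj x y := hTN x hp.2
    by_cases hxx : x = x'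
    · subst hxx
      have hyy : y ≠ y' := fun h => hne (h ▸ rfl)
      exact ⟨fun h => hyy (Sym2.congr_right.1 h),
        fun hC => hT x hp.2 hq.2 hyy (hC (by simp) (by simp) hyy)⟩
    · refine ⟨fun h => ?_, fun hC => hW hp.1 hq.1 hxx (hC (by simp) (by simp) hxx)⟩
      obtain ⟨rfl, -⟩ | ⟨-, rfl⟩ := Sym2.eq_iff.1 h
      · exact hxx rfl
      · exact hW hp.1 hq.1 hxx hxy
  have hinj : Set.InjOn (fun p : Σ _ : V, V => s(p.1, p.2)) (P : Set _) := fun p hp q hq h =>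
    by_contra fun hne => (key p hp q hq hne).1 h
  rw [← sum_congr rfl fun x _ => hcard x, ← card_sigma, ← card_image_of_injOn hinj]
  refine card_le_indepNum_induce ?_ fun e he f hf hne => ?_
  · rintro _ he
    obtain ⟨p, hp, rfl⟩ := mem_image.1 he
    exact hTN p.1 (mem_sigma.1 hp).2
  · obtain ⟨p, hp, rfl⟩ := mem_image.1 he
    obtain ⟨q, hq, rfl⟩ := mem_image.1 hf
    exact fun hadj => (key p hp q hq fun h => hne (h ▸ rfl)).2 hadj.2

theorem exists_isIndepSet_indepNum_le_sum [Fintype V] [DecidableEq V]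
    (hG : IsEmpty (pathGraph 4 ↪g G)) :
    ∃ W : Finset V, G.IsIndepSet W ∧ ((commonCliqueGraph G).induce G.edgeSet).indepNum ≤
      ∑ x ∈ W, (G.induce (G.neighborSet x)).indepNum := by
  obtain ⟨F, hFE, hF, hcard⟩ :=
    exists_isIndepSet_card_eq_indepNum_induce (G := commonCliqueGraph G) G.edgeSet
  have hP : IsCliquePacking G univ F 0 :=
    ⟨fun _ _ => mem_sym2_iff.2 fun _ _ => mem_univ _, hFE, hF, fun _ _ h => absurd rfl h⟩
  have hk : maxCliqueWeight G univ 0 ≤ 0 := by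
    obtain ⟨Q, -, -, h⟩ := exists_isClique_sum_eq_maxCliqueWeight (G := G) univ 0
    simp [← h]
  obtain ⟨W, -, hW, hle⟩ := hP.leIndepSum hG hk
  exact ⟨W, hW, by simpa [hcard] using hle⟩

end Cograph

/-- For a finite cograph `G` (no induced path on four vertices),
`α'(G) = max { Σ_{x ∈ W} d'(x) : W an independent set of vertices of G }`, where
`d'(x)` is the independence number of the subgraph induced by the open neighborhood
of `x` and `α'(G) = α(K_e(G))`. -/
theorem alpha'_eq_max_sum_of_cograph {V : Type*} [Fintype V] (G : SimpleGraph V)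
    (hcograph : IsEmpty (SimpleGraph.pathGraph 4 ↪g G)) :
    ECG.indepNum (ECG.edgeCliqueGraph G) =
      sSup {n | ∃ W : Finset V, ECG.IsIndepSet G ↑W ∧
        n = ∑ x ∈ W, ECG.indepNum (G.induce (G.neighborSet x))} := by
  classical
  simp only [ECG.indepNum_eq_indepNum, Cograph.edgeCliqueGraph_eq_induce]
  obtain ⟨W, hW, hle⟩ := Cograph.exists_isIndepSet_indepNum_le_sum hcograph
  have hge (W : Finset V) (hW : G.IsIndepSet W) :
      ∑ x ∈ W, (G.induce (G.neighborSet x)).indepNum ≤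
        ((Cograph.commonCliqueGraph G).induce G.edgeSet).indepNum :=
    Cograph.sum_indepNum_le_indepNum_commonCliqueGraph hW
  symm
  refine IsGreatest.csSup_eq ⟨⟨W, hW, hle.antisymm (hge W hW)⟩, ?_⟩
  rintro _ ⟨W', hW', rfl⟩
  exact hge W' hW'
end

section
/- Let G be a finite simple graph such that for every vertex v the subgraph of G induced by the open neighborhood N(v) is bipartite (i.e. G has no odd wheel). Then for every vertex e of the edge-clique graph K_e(G), the subgraph of K_e(G) induced by the neighborhood of e is either empty or a matching; that is, it has maximum degree at most 1. -/
/-!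
If every neighbourhood of `G` is bipartite, then no neighbourhood contains a triangle, so `G`
is `K₄`-free. Two edges adjacent in `K_e(G)` then span a triangle `xyz`, say as `xy` and `xz`;
an edge adjacent to both has all its endpoints adjacent to `x`, `y` and `z`, so by
`K₄`-freeness it lies inside the triangle, and the only such edge left is `yz`.
-/

namespace SimpleGraph

variable {V : Type*} {G : SimpleGraph V}

theorem cliqueFree_succ_of_forall_cliqueFree_induce_neighborSet {n : ℕ}
    (h : ∀ v, (G.induce (G.neighborSet v)).CliqueFree n) : G.CliqueFree (n + 1) := by
  classical
  intro s hs
  obtain ⟨a, ha⟩ : s.Nonempty := Finset.card_pos.1 (by rw [hs.card_eq]; omega)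
  refine (cliqueFree_induce_iff ..).1 (h a) (t := s.erase a) (fun b hb => ?_)
    (hs.erase_of_mem ha)
  obtain ⟨hba, hbs⟩ := Finset.mem_erase.1 hb
  exact hs.isClique ha hbs (Ne.symm hba)

theorem CliqueFree.not_adj_triangle (hG : G.CliqueFree 4) {w x y z : V}
    (hxy : G.Adj x y) (hxz : G.Adj x z) (hyz : G.Adj y z) :
    ¬ (G.Adj w x ∧ G.Adj w y ∧ G.Adj w z) := by
  classical
  rintro ⟨hwx, hwy, hwz⟩
  refine hG (insert w {x, y, z}) ((is3Clique_triple_iff.2 ⟨hxy, hxz, hyz⟩).insert ?_)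
  simp [hwx, hwy, hwz]

end SimpleGraph

namespace ECG

open SimpleGraph

variable {V : Type*} {G : SimpleGraph V}

theorem exists_triangle_of_edgeCliqueGraph_adj (hG : G.CliqueFree 4) {e f : G.edgeSet}
    (hef : (edgeCliqueGraph G).Adj e f) :
    ∃ x y z, G.Adj x y ∧ G.Adj x z ∧ G.Adj y z ∧
      (e : Sym2 V) = s(x, y) ∧ (f : Sym2 V) = s(x, z) := by
  obtain ⟨e, he⟩ := e
  obtain ⟨f, hf⟩ := f
  obtain ⟨hef, hcl⟩ := hef
  induction e using Sym2.inductionOn with | hf a b => ?_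
  induction f using Sym2.inductionOn with | hf c d => ?_
  have hne : s(a, b) ≠ s(c, d) := fun h => hef (Subtype.ext h)
  rw [mem_edgeSet] at he hf
  by_cases hac : a = c
  · subst hac
    exact ⟨a, b, d, he, hf, hcl (by simp) (by simp) (by rintro rfl; exact hne rfl), rfl, rfl⟩
  by_cases had : a = d
  · subst had
    exact ⟨a, b, c, he, hf.symm, hcl (by simp) (by simp) (by rintro rfl; exact hne Sym2.eq_swap),
      rfl, Sym2.eq_swap⟩
  by_cases hbc : b = c
  · subst hbc
    exact ⟨b, a, d, he.symm, hf, hcl (by simp) (by simp) had, Sym2.eq_swap, rfl⟩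
  by_cases hbd : b = d
  · subst hbd
    exact ⟨b, a, c, he.symm, hf.symm, hcl (by simp) (by simp) hac, Sym2.eq_swap, Sym2.eq_swap⟩
  exact (hG.not_adj_triangle he (hcl (by simp) (by simp) hac) (hcl (by simp) (by simp) hbc)
    ⟨hcl (by simp) (by simp) (Ne.symm had), hcl (by simp) (by simp) (Ne.symm hbd), hf.symm⟩).elim

theorem coe_eq_of_edgeCliqueGraph_adj_of_adj (hG : G.CliqueFree 4) {x y z : V}
    (hxy : G.Adj x y) (hxz : G.Adj x z) (hyz : G.Adj y z) {e f g : G.edgeSet}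
    (he : (e : Sym2 V) = s(x, y)) (hf : (f : Sym2 V) = s(x, z))
    (heg : (edgeCliqueGraph G).Adj e g) (hfg : (edgeCliqueGraph G).Adj f g) :
    (g : Sym2 V) = s(y, z) := by
  obtain ⟨g, hg⟩ := g
  induction g using Sym2.inductionOn with | hf p q => ?_
  have hge : s(p, q) ≠ s(x, y) := fun h => heg.1 (Subtype.ext (he.trans h.symm))
  have hgf : s(p, q) ≠ s(x, z) := fun h => hfg.1 (Subtype.ext (hf.trans h.symm))
  have mem_triangle : ∀ w ∈ s(p, q), w = x ∨ w = y ∨ w = z := by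
    intro w hw
    by_contra! hw'
    exact hG.not_adj_triangle hxy hxz hyz
      ⟨heg.2 (Or.inr hw) (Or.inl (by simp [he])) hw'.1,
        heg.2 (Or.inr hw) (Or.inl (by simp [he])) hw'.2.1,
        hfg.2 (Or.inr hw) (Or.inl (by simp [hf])) hw'.2.2⟩
  have hpq : p ≠ q := ((mem_edgeSet G).1 hg).ne
  rcases mem_triangle p (by simp) with rfl | rfl | rfl <;>
    rcases mem_triangle q (by simp) with rfl | rfl | rfl <;>
    simp_all [Sym2.eq_swap]

theorem eq_of_edgeCliqueGraph_adj_of_adj (hG : G.CliqueFree 4) {e f g₁ g₂ : G.edgeSet}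
    (hef : (edgeCliqueGraph G).Adj e f)
    (h₁e : (edgeCliqueGraph G).Adj e g₁) (h₁f : (edgeCliqueGraph G).Adj f g₁)
    (h₂e : (edgeCliqueGraph G).Adj e g₂) (h₂f : (edgeCliqueGraph G).Adj f g₂) : g₁ = g₂ := by
  obtain ⟨x, y, z, hxy, hxz, hyz, he, hf⟩ := exists_triangle_of_edgeCliqueGraph_adj hG hef
  exact Subtype.ext <| (coe_eq_of_edgeCliqueGraph_adj_of_adj hG hxy hxz hyz he hf h₁e h₁f).trans
    (coe_eq_of_edgeCliqueGraph_adj_of_adj hG hxy hxz hyz he hf h₂e h₂f).symm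

end ECG

theorem edgeCliqueGraph_neighborhood_matching_general {V : Type*}
    (G : SimpleGraph V)
    (h : ∀ v : V, (G.induce (G.neighborSet v)).Colorable 2)
    (e : G.edgeSet) :
    ∀ f g₁ g₂ : ((ECG.edgeCliqueGraph G).neighborSet e),
      ((ECG.edgeCliqueGraph G).induce ((ECG.edgeCliqueGraph G).neighborSet e)).Adj f g₁ →
      ((ECG.edgeCliqueGraph G).induce ((ECG.edgeCliqueGraph G).neighborSet e)).Adj f g₂ →
      g₁ = g₂ := by
  intro f g₁ g₂ h₁ h₂
  have hG : G.CliqueFree 4 :=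
    SimpleGraph.cliqueFree_succ_of_forall_cliqueFree_induce_neighborSet
      fun v => (h v).cliqueFree (by norm_num)
  exact Subtype.ext (ECG.eq_of_edgeCliqueGraph_adj_of_adj hG f.2 g₁.2 h₁ g₂.2 h₂)

/-- If every open neighborhood in `G` induces a bipartite (2-colorable)
subgraph (i.e. `G` has no odd wheel), then for every vertex `e` of `K_e(G)` the
subgraph of `K_e(G)` induced by the neighborhood of `e` has maximum degree at most 1,
i.e. it is empty or a matching. -/
theorem edgeCliqueGraph_neighborhood_matching {V : Type*} [Fintype V]
    (G : SimpleGraph V)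
    (h : ∀ v : V, (G.induce (G.neighborSet v)).Colorable 2)
    (e : G.edgeSet) :
    ∀ f g₁ g₂ : ((ECG.edgeCliqueGraph G).neighborSet e),
      ((ECG.edgeCliqueGraph G).induce ((ECG.edgeCliqueGraph G).neighborSet e)).Adj f g₁ →
      ((ECG.edgeCliqueGraph G).induce ((ECG.edgeCliqueGraph G).neighborSet e)).Adj f g₂ →
      g₁ = g₂ :=
  edgeCliqueGraph_neighborhood_matching_general G h e
end

section
/- Let G be a finite trivially perfect graph (no induced P4 and no induced C4). Then the independence number α(G) equals the number of maximal cliques of G. -/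
open Finset

namespace SimpleGraph

variable {V : Type*} {G : SimpleGraph V}

def closedNeighborSet (G : SimpleGraph V) (v : V) : Set V := insert v (G.neighborSet v)

@[simp]
lemma mem_closedNeighborSet {u v : V} : u ∈ G.closedNeighborSet v ↔ u = v ∨ G.Adj v u :=
  Iff.rfl

lemma IsClique.subset_closedNeighborSet {K : Set V} (hK : G.IsClique K) {v : V} (hv : v ∈ K) :
    K ⊆ G.closedNeighborSet v := fun u hu =>
  (eq_or_ne u v).imp id fun huv => hK hv hu huv.symm

lemma maximal_isClique_iff {S : Set V} :
    Maximal G.IsClique S ↔ G.IsClique S ∧ ∀ T, G.IsClique T → S ⊆ T → S = T :=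
  ⟨fun h => ⟨h.prop, fun _ hT hST => h.eq_of_subset hT hST⟩,
    fun h => ⟨h.1, fun T hT hST => (h.2 T hT hST).symm.subset⟩⟩

lemma closedNeighborSet_eq_of_adj {x y : V} (hx : Maximal G.IsClique (G.closedNeighborSet x))
    (hy : Maximal G.IsClique (G.closedNeighborSet y)) (hxy : G.Adj x y) :
    G.closedNeighborSet x = G.closedNeighborSet y :=
  hx.eq_of_subset hy.prop (hx.prop.subset_closedNeighborSet (.inr hxy))

lemma IsIndepSet.card_le_ncard_maximal_isClique [Finite V] {S : Finset V} (hS : G.IsIndepSet S) :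
    #S ≤ {K : Set V | K.Nonempty ∧ Maximal G.IsClique K}.ncard := by
  have hcover (v : V) : ∃ K, v ∈ K ∧ Maximal G.IsClique K := by
    obtain ⟨K, hvK, hK⟩ := Finite.exists_le_maximal (G.isClique_singleton v)
    exact ⟨K, hvK rfl, hK⟩
  choose K hvK hK using hcover
  rw [← Set.ncard_coe_finset]
  refine Set.ncard_le_ncard_of_injOn K (fun v _ => ⟨⟨v, hvK v⟩, hK v⟩) ?_ (Set.toFinite _)
  intro u hu v hv huv
  by_contra hne
  exact hS hu hv hne ((hK v).prop (huv ▸ hvK u) (hvK v) hne)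

lemma exists_isIndepSet_card_eq_ncard_maximal_isClique [Finite V]
    (h : ∀ K : Set V, K.Nonempty → Maximal G.IsClique K → ∃ x, G.closedNeighborSet x = K) :
    ∃ S : Finset V, G.IsIndepSet S ∧
      #S = {K : Set V | K.Nonempty ∧ Maximal G.IsClique K}.ncard := by
  have hsurj : Set.SurjOn G.closedNeighborSet Set.univ
      {K : Set V | K.Nonempty ∧ Maximal G.IsClique K} := fun K ⟨hne, hK⟩ =>
    (h K hne hK).imp fun x hx => ⟨trivial, hx⟩
  obtain ⟨S, -, hbij⟩ := hsurj.exists_bijOn_subset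
  refine ⟨(Set.toFinite S).toFinset, ?_, by
    rw [← hbij.ncard_eq, Set.ncard_eq_toFinset_card S]⟩
  intro x hx y hy hne hxy
  simp only [Set.Finite.coe_toFinset] at hx hy
  exact hne (hbij.injOn hx hy (closedNeighborSet_eq_of_adj
    (hbij.mapsTo hx).2 (hbij.mapsTo hy).2 hxy))

lemma nonempty_pathGraph_embedding_or_cycleGraph_embedding {y x z w : V}
    (hyx : G.Adj y x) (hxz : G.Adj x z) (hzw : G.Adj z w)
    (hyz : y ≠ z) (hyz' : ¬ G.Adj y z) (hxw : x ≠ w) (hxw' : ¬ G.Adj x w) (hyw : y ≠ w) :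
    Nonempty (pathGraph 4 ↪g G) ∨ Nonempty (cycleGraph 4 ↪g G) := by
  have hinj : Function.Injective ![y, x, z, w] := by
    have := hyx.ne; have := hxz.ne; have := hzw.ne
    intro a b hab
    fin_cases a <;> fin_cases b <;> simp_all
  have := hyx.symm; have := hxz.symm; have := hzw.symm
  have := mt G.adj_symm hyz'; have := mt G.adj_symm hxw'
  by_cases hwy : G.Adj w y
  · have := hwy.symm
    refine .inr ⟨⟨⟨![y, x, z, w], hinj⟩, ?_⟩⟩
    intro a b
    fin_cases a <;> fin_cases b <;> simp [cycleGraph_adj, *] <;> decide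
  · have := mt G.adj_symm hwy
    refine .inl ⟨⟨⟨![y, x, z, w], hinj⟩, ?_⟩⟩
    intro a b
    fin_cases a <;> fin_cases b <;> simp [pathGraph_adj, *]

section TriviallyPerfect

variable (hP4 : IsEmpty (pathGraph 4 ↪g G)) (hC4 : IsEmpty (cycleGraph 4 ↪g G))
include hP4 hC4

lemma closedNeighborSet_subset_or_subset {x z : V} (hxz : G.Adj x z) :
    G.closedNeighborSet x ⊆ G.closedNeighborSet z ∨
      G.closedNeighborSet z ⊆ G.closedNeighborSet x := by
  by_contra! h
  obtain ⟨⟨y, hyx, hyz⟩, ⟨w, hwz, hwx⟩⟩ := h.imp Set.not_subset.mp Set.not_subset.mp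
  simp only [mem_closedNeighborSet, not_or] at hyx hyz hwz hwx
  have hxy : G.Adj x y := hyx.resolve_left fun h => hyz.2 (h ▸ hxz.symm)
  have hzw : G.Adj z w := hwz.resolve_left fun h => hwx.2 (h ▸ hxz)
  have hyw : y ≠ w := by rintro rfl; exact hyz.2 hzw
  rcases nonempty_pathGraph_embedding_or_cycleGraph_embedding hxy.symm hxz hzw hyz.1
    (fun h => hyz.2 h.symm) (Ne.symm hwx.1) hwx.2 hyw with h | h
  exacts [h.elim hP4.false, h.elim hC4.false]

lemma exists_closedNeighborSet_eq_of_maximal_isClique {K : Set V} (hK : Maximal G.IsClique K)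
    (hfin : K.Finite) (hne : K.Nonempty) : ∃ x, G.closedNeighborSet x = K := by
  obtain ⟨x, hxK, hmin⟩ := hfin.exists_minimalFor G.closedNeighborSet K hne
  have hleast : ∀ z ∈ K, G.closedNeighborSet x ⊆ G.closedNeighborSet z := by
    intro z hz
    obtain rfl | hxz := eq_or_ne x z
    · rfl
    exact (closedNeighborSet_subset_or_subset hP4 hC4 (hK.prop hxK hz hxz)).elim id (hmin hz)
  refine ⟨x, subset_antisymm (fun u hu => hK.mem_of_prop_insert ?_)
    (hK.prop.subset_closedNeighborSet hxK)⟩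
  exact hK.prop.insert fun z hz huz => ((hleast z hz hu).resolve_left huz).symm

lemma indepNum_eq_ncard_maximal_isClique [Finite V] :
    G.indepNum = {K : Set V | K.Nonempty ∧ Maximal G.IsClique K}.ncard := by
  refine le_antisymm ?_ ?_
  · obtain ⟨S, hS⟩ := G.exists_isNIndepSet_indepNum
    exact hS.card_eq ▸ hS.isIndepSet.card_le_ncard_maximal_isClique
  · obtain ⟨S, hS, hcard⟩ := exists_isIndepSet_card_eq_ncard_maximal_isClique fun K hne hK =>
      exists_closedNeighborSet_eq_of_maximal_isClique hP4 hC4 hK (Set.toFinite K) hne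
    exact hcard ▸ hS.card_le_indepNum

end TriviallyPerfect

end SimpleGraph

lemma ECG.indepNum_eq_indepNum_s13 {V : Type*} (G : SimpleGraph V) : ECG.indepNum G = G.indepNum :=
  congrArg sSup <| Set.ext fun _ =>
    ⟨fun ⟨S, hS, hcard⟩ => ⟨S, hS, hcard⟩, fun ⟨S, hS⟩ => ⟨S, hS.1, hS.2⟩⟩

/-- For a finite trivially perfect graph `G` (no induced `P₄` and no
induced `C₄`), the independence number `α(G)` equals the number of maximal cliques
of `G`. -/
theorem indepNum_eq_card_maximal_cliques_of_triviallyPerfect {V : Type*} [Fintype V]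
    (G : SimpleGraph V)
    (hP4 : IsEmpty (SimpleGraph.pathGraph 4 ↪g G))
    (hC4 : IsEmpty (SimpleGraph.cycleGraph 4 ↪g G)) :
    ECG.indepNum G =
      {S : Set V | S.Nonempty ∧ G.IsClique S ∧
        ∀ T : Set V, G.IsClique T → S ⊆ T → S = T}.ncard := by
  simp only [← SimpleGraph.maximal_isClique_iff, ECG.indepNum_eq_indepNum_s13]
  exact SimpleGraph.indepNum_eq_ncard_maximal_isClique hP4 hC4
end
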